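/- arXiv:1309.5423 — 3 statements merged into one kernel-verified Lean document; each statement's English description precedes it below -/
import Mathlib

section
/- Let n ≥ 1, let a : Fin n → ℤ be monotone nondecreasing, and let σ be a permutation of Fin n. Then ∑_{i=0}^{n−2} |a(σ(i+1)) − a(σ(i))| = a(n−1) − a(0) holds if and only if either a(σ(i)) = a(i) for all i, or a(σ(i)) = a(n−1−i) for all i. (This is the equality case of Lemma: equality of total lengths holds exactly when σ[b] ∈ {[b], [b]*}, where [b]* = [−b_{n−2},…,−b_0] is the class of the reversed sequence.) -/
/-!
Let `c = a ∘ σ`; the values `a (n-1)` and `a 0` sit in `c` at `p = σ⁻¹ (n-1)` and `q = σ⁻¹ 0`.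
If `q ≤ p`, splitting the variation of `c` at `q` and `p` bounds it below by
`|c q - c 0| + (c p - c q) + |c (n-1) - c p|`, so equality forces `c 0 = c q` and
`c (n-1) = c p`; splitting at any `i ≤ j` then forces `c i ≤ c j`. A monotone rearrangement of
the monotone `a` is `a` itself. If `p ≤ q`, the same argument applied to `-c` shows that `c` is
antitone, so `c ∘ rev` is a monotone rearrangement of `a`.
-/

open Finset Function

section FinExtend

variable {β : Type*} {n : ℕ}

theorem extend_val_apply [Zero β] (c : Fin n → β) (k : ℕ) (hk : k < n) :
    extend Fin.val c 0 k = c ⟨k, hk⟩ :=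
  Fin.val_injective.extend_apply c 0 ⟨k, hk⟩

theorem monotoneOn_Iic_iff_monotone [Preorder β] {c : Fin n → β} {g : ℕ → β}
    (hg : ∀ k (hk : k < n), g k = c ⟨k, hk⟩) : MonotoneOn g (Set.Iic (n - 1)) ↔ Monotone c := by
  constructor
  · intro h i j hij
    rw [← hg i i.2, ← hg j j.2]
    exact h (Set.mem_Iic.2 (by omega)) (Set.mem_Iic.2 (by omega)) hij
  · intro h k hk l hl hkl
    rw [Set.mem_Iic] at hk hl
    rcases Nat.lt_or_ge l n with hln | hln
    · rw [hg k (by omega), hg l hln]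
      exact h (Fin.mk_le_mk.2 hkl)
    · obtain rfl : k = l := by omega
      exact le_rfl

end FinExtend

variable {α : Type*} [AddCommGroup α] [LinearOrder α]

section SeqVariation

def seqVariation (g : ℕ → α) (i j : ℕ) : α := ∑ k ∈ Ico i j, |g (k + 1) - g k|

variable (g : ℕ → α) {i j m : ℕ}

theorem seqVariation_add {k : ℕ} (hij : i ≤ j) (hjk : j ≤ k) :
    seqVariation g i j + seqVariation g j k = seqVariation g i k :=
  sum_Ico_consecutive _ hij hjk

theorem seqVariation_neg : seqVariation (-g) i j = seqVariation g i j := by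
  simp only [seqVariation, Pi.neg_apply, ← neg_sub', abs_neg]

variable [IsOrderedAddMonoid α]

theorem abs_sub_le_seqVariation (hij : i ≤ j) : |g j - g i| ≤ seqVariation g i j := by
  rw [← sum_Ico_sub g hij]
  exact abs_sum_le_sum_abs _ _

theorem abs_sub_add_abs_sub_add_abs_sub_le_seqVariation (hij : i ≤ j) (hjm : j ≤ m) :
    |g i - g 0| + |g j - g i| + |g m - g j| ≤ seqVariation g 0 m := by
  rw [← seqVariation_add g i.zero_le (hij.trans hjm), ← seqVariation_add g hij hjm, ← add_assoc]
  gcongr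
  exacts [abs_sub_le_seqVariation g i.zero_le, abs_sub_le_seqVariation g hij,
    abs_sub_le_seqVariation g hjm]

theorem seqVariation_eq_sub_iff : seqVariation g 0 m = g m - g 0 ↔ MonotoneOn g (Set.Iic m) := by
  constructor
  · intro h i _ j hj hij
    have key := abs_sub_add_abs_sub_add_abs_sub_le_seqVariation g hij hj
    rw [h, show g m - g 0 = (g i - g 0) + (g j - g i) + (g m - g j) by abel] at key
    have : |g j - g i| ≤ g j - g i := by
      by_contra! hlt
      exact key.not_gt (add_lt_add_of_lt_of_le
        (add_lt_add_of_le_of_lt (le_abs_self _) hlt) (le_abs_self _))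
    exact sub_nonneg.1 ((abs_nonneg _).trans this)
  · intro h
    rw [← sum_Ico_sub g m.zero_le]
    refine sum_congr rfl fun k hk => abs_of_nonneg (sub_nonneg.2 (h ?_ ?_ k.le_succ)) <;>
      simp only [mem_Ico, Set.mem_Iic] at hk ⊢ <;> omega

theorem monotoneOn_of_seqVariation_eq_sub {p q : ℕ} (hqp : q ≤ p) (hpm : p ≤ m)
    (h : seqVariation g 0 m = g p - g q) : MonotoneOn g (Set.Iic m) := by
  have key := (add_le_add_left (add_le_add_right (le_abs_self (g p - g q)) _) _).trans
    ((abs_sub_add_abs_sub_add_abs_sub_le_seqVariation g hqp hpm).trans h.le)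
  rw [add_right_comm, add_le_iff_nonpos_left] at key
  obtain ⟨h0, hm⟩ := (add_eq_zero_iff_of_nonneg (abs_nonneg _) (abs_nonneg _)).1
    (key.antisymm (add_nonneg (abs_nonneg _) (abs_nonneg _)))
  rw [abs_eq_zero, sub_eq_zero] at h0 hm
  rw [← seqVariation_eq_sub_iff, h, h0, hm]

end SeqVariation

section FinVariation

variable {n : ℕ}

def finVariation (c : Fin n → α) : α :=
  ∑ i : Fin (n - 1), |c ⟨i.1 + 1, Nat.add_lt_of_lt_sub i.2⟩ - c ⟨i.1, Nat.lt_of_lt_pred i.2⟩|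

variable {c : Fin n → α}

theorem finVariation_eq_seqVariation {g : ℕ → α} (hg : ∀ k (hk : k < n), g k = c ⟨k, hk⟩) :
    finVariation c = seqVariation g 0 (n - 1) := by
  rw [seqVariation, ← range_eq_Ico, ← Fin.sum_univ_eq_sum_range]
  refine sum_congr rfl fun i _ => ?_
  rw [hg, hg]

theorem finVariation_neg (c : Fin n → α) : finVariation (-c) = finVariation c := by
  simp only [finVariation, Pi.neg_apply, ← neg_sub', abs_neg]

variable [IsOrderedAddMonoid α]

theorem Monotone.finVariation_eq (hn : 1 ≤ n) (hc : Monotone c) :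
    finVariation c = c ⟨n - 1, Nat.sub_lt hn Nat.one_pos⟩ - c ⟨0, hn⟩ := by
  have hg := extend_val_apply c
  rw [finVariation_eq_seqVariation hg,
    (seqVariation_eq_sub_iff _).2 ((monotoneOn_Iic_iff_monotone hg).2 hc), hg, hg]

theorem Antitone.finVariation_eq (hn : 1 ≤ n) (hc : Antitone c) :
    finVariation c = c ⟨0, hn⟩ - c ⟨n - 1, Nat.sub_lt hn Nat.one_pos⟩ := by
  rw [← finVariation_neg, (show Monotone (-c) from hc.neg).finVariation_eq hn, Pi.neg_apply,
    Pi.neg_apply, neg_sub_neg]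

theorem monotone_or_antitone_of_finVariation_eq_sub {p q : Fin n}
    (h : finVariation c = c p - c q) : Monotone c ∨ Antitone c := by
  have hg := extend_val_apply c
  rw [finVariation_eq_seqVariation hg, ← hg p p.2, ← hg q q.2] at h
  rcases le_total q p with hqp | hpq
  · exact .inl ((monotoneOn_Iic_iff_monotone hg).1
      (monotoneOn_of_seqVariation_eq_sub _ hqp (Nat.le_sub_one_of_lt p.2) h))
  · have hg' : ∀ k (hk : k < n), (-extend Fin.val c 0) k = (-c) ⟨k, hk⟩ := fun k hk => by
      rw [Pi.neg_apply, hg k hk, Pi.neg_apply]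
    have hneg := monotoneOn_of_seqVariation_eq_sub (-extend Fin.val c 0) hpq
      (Nat.le_sub_one_of_lt q.2)
      (by rw [seqVariation_neg, h, Pi.neg_apply, Pi.neg_apply, neg_sub_neg])
    have hmono : Monotone (-c) := (monotoneOn_Iic_iff_monotone hg').1 hneg
    exact .inr fun i j hij => neg_le_neg_iff.1 (hmono hij)

end FinVariation

section Rearrangement

variable {β : Type*} [PartialOrder β] {n : ℕ} {a : Fin n → β} {σ : Equiv.Perm (Fin n)}

theorem comp_perm_eq_of_monotone (ha : Monotone a) (h : Monotone (a ∘ σ)) : a ∘ σ = a :=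
  Tuple.unique_monotone (τ := 1) h ha

theorem comp_perm_eq_comp_rev_of_antitone (ha : Monotone a) (h : Antitone (a ∘ σ)) :
    a ∘ σ = a ∘ Fin.rev := by
  have := comp_perm_eq_of_monotone (σ := Fin.revPerm.trans σ) ha (h.comp Fin.rev_anti)
  ext i
  simpa using congrFun this i.rev

end Rearrangement

/-- For a monotone nondecreasing `a : Fin n → ℤ` (n ≥ 1) and a permutation σ of
`Fin n`, the total variation of `a ∘ σ` equals `a (n-1) - a 0` if and only if `a ∘ σ = a` or
`a ∘ σ` is the reversal of `a`. (Equality case of Lemma: σ[b] ∈ {[b], [b]*}.) -/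
theorem stmt3 (n : ℕ) (hn : 1 ≤ n) (a : Fin n → ℤ) (ha : Monotone a)
    (σ : Equiv.Perm (Fin n)) :
    (∑ i : Fin (n - 1),
        |a (σ ⟨i.1 + 1, by have := i.2; omega⟩) - a (σ ⟨i.1, by have := i.2; omega⟩)|
      = a ⟨n - 1, by omega⟩ - a ⟨0, by omega⟩) ↔
    ((∀ i : Fin n, a (σ i) = a i) ∨
      (∀ i : Fin n, a (σ i) = a ⟨n - 1 - i.1, by omega⟩)) := by
  have hrev : ∀ i : Fin n, a ⟨n - 1 - i.1, by omega⟩ = a i.rev := fun i =>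
    congrArg a (Fin.ext (by simp only [Fin.val_rev]; omega))
  simp only [hrev]
  change finVariation (a ∘ σ) = _ ↔ (∀ i, (a ∘ σ) i = a i) ∨ ∀ i, (a ∘ σ) i = (a ∘ Fin.rev) i
  rw [← funext_iff, ← funext_iff]
  constructor
  · intro h
    rw [← σ.apply_symm_apply ⟨n - 1, _⟩, ← σ.apply_symm_apply ⟨0, _⟩] at h
    rcases monotone_or_antitone_of_finVariation_eq_sub h with hmono | hanti
    · exact .inl (comp_perm_eq_of_monotone ha hmono)
    · exact .inr (comp_perm_eq_comp_rev_of_antitone ha hanti)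
  · rintro (h | h) <;> rw [h]
    · exact ha.finVariation_eq hn
    · rw [(ha.comp_antitone Fin.rev_anti).finVariation_eq hn]
      congr 2
      exact congrArg a (Fin.ext (by simp only [Fin.val_rev]; omega))
end

section
/- Let a : Fin n → ℤ be totally positive normalized, let Δ = Δ_0 ∩ Δ_a, and let c, d : Fin n → ℤ be such that Δ ⊆ Δ_c and Δ ⊆ Δ_d. If for every maximal R-order D of Mₙ(K) one has Δ_c ∩ Δ_d ⊆ D if and only if Δ ⊆ D, then either (Δ_c = Δ_0 and Δ_d = Δ_a) or (Δ_c = Δ_a and Δ_d = Δ_0). (Split case, B = K, of the Lemma: if Δ_[c], Δ_[d] ∈ S₀(Δ) satisfy S₀(Δ) = S₀(Δ_[c] ∩ Δ_[d]), then ([c],[d]) = (0,[b]) or ([d],[c]) = (0,[b]).) -/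
variable (R K : Type*) [CommRing R] [IsDomain R] [IsDiscreteValuationRing R]
  [Field K] [Algebra R K] [IsFractionRing R K]

/-- The order `Δ_a` in `Mₙ(K)`: matrices `X` with `π^(a j - a i) * X i j ∈ R` for all `i, j`. -/
def Delta (π : R) {n : ℕ} (a : Fin n → ℤ) : Set (Matrix (Fin n) (Fin n) K) :=
  {X | ∀ i j, (algebraMap R K π) ^ (a j - a i) * X i j ∈ (algebraMap R K).range}

/-- An `R`-order in `Mₙ(K)`: an `R`-subalgebra, finitely generated as an `R`-module,
spanning `Mₙ(K)` over `K`. -/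
def IsOrder {n : ℕ} (D : Subalgebra R (Matrix (Fin n) (Fin n) K)) : Prop :=
  (Subalgebra.toSubmodule D).FG ∧
    Submodule.span K (D : Set (Matrix (Fin n) (Fin n) K)) = ⊤

/-- A maximal `R`-order in `Mₙ(K)`. -/
def IsMaximalOrder {n : ℕ} (D : Subalgebra R (Matrix (Fin n) (Fin n) K)) : Prop :=
  IsOrder R K D ∧ ∀ D' : Subalgebra R (Matrix (Fin n) (Fin n) K),
    IsOrder R K D' → D ≤ D' → D' = D

/-!
`Δ_0` and `Δ_a` are maximal orders containing `Δ = Δ_0 ∩ Δ_a`, so the hypothesis forces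
`Δ_c ∩ Δ_d = Δ_0 ∩ Δ_a`. Testing on matrix units `π^(-m) E_ij` shows that `Δ_e ∩ Δ_f` is
determined by the integers `min (e j - e i) (f j - f i)`, so for all `i, j` the pair
`{c j - c i, d j - d i}` equals `{0, a j - a i}`; a short case analysis then shows that, up to
additive constants, `(c, d)` is `(0, a)` or `(a, 0)`.
-/

section Valuation

variable {A L : Type*} [CommRing A] [Field L] [Algebra A L] [IsFractionRing A L] {π : A}

lemma algebraMap_ne_zero_of_irreducible (hπ : Irreducible π) : algebraMap A L π ≠ 0 :=
  (map_ne_zero_iff _ (IsFractionRing.injective A L)).mpr hπ.ne_zero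

lemma zpow_algebraMap_mem_range_iff (hπ : Irreducible π) {t : ℤ} :
    algebraMap A L π ^ t ∈ (algebraMap A L).range ↔ 0 ≤ t := by
  have hne := algebraMap_ne_zero_of_irreducible (L := L) hπ
  refine ⟨fun ⟨r, hr⟩ => ?_, fun ht => ?_⟩
  · by_contra! ht
    obtain ⟨k, rfl⟩ : ∃ k : ℕ, t = -(k + 1) := ⟨(-t - 1).toNat, by omega⟩
    have hunit : algebraMap A L (r * π ^ k * π) = 1 := by
      rw [map_mul, map_mul, map_pow, hr, mul_assoc, ← zpow_natCast, ← zpow_add_one₀ hne,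
        ← zpow_add₀ hne, neg_add_cancel, zpow_zero]
    exact hπ.not_isUnit (.of_mul_eq_one_right (r * π ^ k)
      (IsFractionRing.injective A L (by rw [hunit, map_one])))
  · lift t to ℕ using ht
    exact ⟨π ^ t, by simp⟩

lemma zpow_mul_mem_range_of_le (hπ : Irreducible π) {m m' : ℤ} (hm : m ≤ m') {x : L}
    (hx : algebraMap A L π ^ m * x ∈ (algebraMap A L).range) :
    algebraMap A L π ^ m' * x ∈ (algebraMap A L).range := by
  have hsplit : algebraMap A L π ^ m' * x
      = algebraMap A L π ^ (m' - m) * (algebraMap A L π ^ m * x) := by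
    rw [← mul_assoc, ← zpow_add₀ (algebraMap_ne_zero_of_irreducible hπ), sub_add_cancel]
  rw [hsplit]
  exact mul_mem ((zpow_algebraMap_mem_range_iff hπ).mpr (by omega)) hx

end Valuation

lemma Matrix.isIntegral_of_isIntegral_single {A B n : Type*} [CommRing A] [CommRing B]
    [Algebra A B] [Fintype n] [DecidableEq n] {i : n} {x : B}
    (h : IsIntegral A (Matrix.single i i x)) : IsIntegral A x := by
  rw [← Matrix.diagonal_single, ← Matrix.diagonalAlgHom_apply (R := A),
    isIntegral_algHom_iff _ Matrix.diagonal_injective] at h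
  simpa using h.map (Pi.evalAlgHom A (fun _ => B) i)

lemma forall_sub_eq_or_forall_sub_eq_of_min_eq {ι : Type*} (a c d : ι → ℤ)
    (h : ∀ i j, min (c j - c i) (d j - d i) = min 0 (a j - a i)) :
    (∀ i j, c j - c i = 0 ∧ d j - d i = a j - a i) ∨
      (∀ i j, c j - c i = a j - a i ∧ d j - d i = 0) := by
  have hpair : ∀ i j, (c j - c i = 0 ∧ d j - d i = a j - a i) ∨
      (c j - c i = a j - a i ∧ d j - d i = 0) := fun i j => by
    have := h i j
    have := h j i
    omega
  by_cases hc : ∀ i j, c j - c i = 0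
  · exact .inl fun i j => by have := hpair i j; have := hc i j; omega
  obtain ⟨i₀, j₀, hne⟩ : ∃ i j, c j - c i ≠ 0 := by simpa using hc
  -- An index `k` of the first kind with `a k ≠ a i₀` would clash with the pair `(k, j₀)`.
  have hbase : ∀ k, c k - c i₀ = a k - a i₀ ∧ d k - d i₀ = 0 := fun k => by
    have := hpair i₀ k
    have := hpair k j₀
    have := hpair i₀ j₀
    omega
  exact .inr fun i j => by have := hbase i; have := hbase j; omega

section Delta

variable {A L : Type*} [CommRing A] [Field L] [Algebra A L] {π : A} {n : ℕ}

lemma single_mem_Delta_iff (a : Fin n → ℤ) (i j : Fin n) (x : L) :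
    Matrix.single i j x ∈ Delta A L π a ↔
      algebraMap A L π ^ (a j - a i) * x ∈ (algebraMap A L).range := by
  refine ⟨fun h => by simpa using h i j, fun hx i' j' => ?_⟩
  by_cases hij : i = i' ∧ j = j'
  · obtain ⟨rfl, rfl⟩ := hij
    rwa [Matrix.single_apply_same]
  · rw [Matrix.single_apply_of_ne _ _ _ _ _ hij, mul_zero]
    exact zero_mem _

lemma Delta_eq_of_sub_eq {e f : Fin n → ℤ} (h : ∀ i j, e j - e i = f j - f i) :
    Delta A L π e = Delta A L π f := by
  simp only [Delta, h]

variable (hπ : Irreducible π)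
variable [IsFractionRing A L]
include hπ

lemma Delta_inter_subset_iff (e f g : Fin n → ℤ) :
    Delta A L π e ∩ Delta A L π f ⊆ Delta A L π g ↔
      ∀ i j, min (e j - e i) (f j - f i) ≤ g j - g i := by
  have hne := algebraMap_ne_zero_of_irreducible (L := L) hπ
  refine ⟨fun H i j => ?_, fun H X ⟨hXe, hXf⟩ i j => ?_⟩
  · set m := min (e j - e i) (f j - f i)
    have hmem : ∀ t, m ≤ t →
        algebraMap A L π ^ t * algebraMap A L π ^ (-m) ∈ (algebraMap A L).range := fun t ht => by
      rw [← zpow_add₀ hne, zpow_algebraMap_mem_range_iff hπ]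
      omega
    have hg := H ⟨(single_mem_Delta_iff e i j _).mpr (hmem _ (min_le_left _ _)),
      (single_mem_Delta_iff f i j _).mpr (hmem _ (min_le_right _ _))⟩
    rw [single_mem_Delta_iff, ← zpow_add₀ hne, zpow_algebraMap_mem_range_iff hπ] at hg
    omega
  · rcases le_total (e j - e i) (f j - f i) with hef | hef
    · exact zpow_mul_mem_range_of_le hπ ((min_eq_left hef) ▸ H i j) (hXe i j)
    · exact zpow_mul_mem_range_of_le hπ ((min_eq_right hef) ▸ H i j) (hXf i j)

lemma Delta_inter_eq_inter_iff (e f g h : Fin n → ℤ) :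
    Delta A L π e ∩ Delta A L π f = Delta A L π g ∩ Delta A L π h ↔
      ∀ i j, min (e j - e i) (f j - f i) = min (g j - g i) (h j - h i) := by
  simp only [Set.Subset.antisymm_iff, Set.subset_inter_iff, Delta_inter_subset_iff hπ]
  refine ⟨fun ⟨⟨hg, hh⟩, he, hf⟩ i j => ?_, fun H => ?_⟩
  · exact le_antisymm (le_min (hg i j) (hh i j)) (le_min (he i j) (hf i j))
  · exact ⟨⟨fun i j => (H i j).trans_le (min_le_left _ _),
      fun i j => (H i j).trans_le (min_le_right _ _)⟩,
      fun i j => (H i j).symm.trans_le (min_le_left _ _),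
      fun i j => (H i j).symm.trans_le (min_le_right _ _)⟩

lemma single_zpow_mem_Delta (a : Fin n → ℤ) (i j : Fin n) :
    Matrix.single i j (algebraMap A L π ^ (a i - a j)) ∈ Delta A L π a :=
  (single_mem_Delta_iff a i j _).mpr
    ⟨1, by rw [← zpow_add₀ (algebraMap_ne_zero_of_irreducible hπ)]; simp⟩

lemma single_eq_smul_single_zpow (a : Fin n → ℤ) (i j : Fin n) (x : L) :
    Matrix.single i j x = (algebraMap A L π ^ (a j - a i) * x) •
      Matrix.single i j (algebraMap A L π ^ (a i - a j)) := by
  rw [Matrix.smul_single, smul_eq_mul, mul_right_comm,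
    ← zpow_add₀ (algebraMap_ne_zero_of_irreducible hπ)]
  simp

variable (L) in
def deltaSubalgebra (a : Fin n → ℤ) : Subalgebra A (Matrix (Fin n) (Fin n) L) where
  carrier := Delta A L π a
  mul_mem' {X Y} hX hY i j := by
    rw [Matrix.mul_apply, Finset.mul_sum]
    refine sum_mem fun k _ => ?_
    have hsplit : algebraMap A L π ^ (a j - a i) * (X i k * Y k j)
        = (algebraMap A L π ^ (a k - a i) * X i k) * (algebraMap A L π ^ (a j - a k) * Y k j) := by
      rw [mul_mul_mul_comm, ← zpow_add₀ (algebraMap_ne_zero_of_irreducible hπ),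
        sub_add_sub_cancel']
    rw [hsplit]
    exact mul_mem (hX i k) (hY k j)
  add_mem' {X Y} hX hY i j := by
    rw [Matrix.add_apply, mul_add]
    exact add_mem (hX i j) (hY i j)
  algebraMap_mem' r i j := by
    rw [Matrix.algebraMap_matrix_apply]
    split_ifs with hij
    · rw [hij, sub_self, zpow_zero, one_mul]
      exact ⟨r, rfl⟩
    · rw [mul_zero]
      exact zero_mem _

lemma isOrder_deltaSubalgebra (a : Fin n → ℤ) : IsOrder A L (deltaSubalgebra L hπ a) := by
  let gen : Fin n × Fin n → Matrix (Fin n) (Fin n) L :=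
    fun p => Matrix.single p.1 p.2 (algebraMap A L π ^ (a p.1 - a p.2))
  have hgen : Subalgebra.toSubmodule (deltaSubalgebra L hπ a) =
      Submodule.span A (Set.range gen) := by
    refine le_antisymm (fun X hX => ?_) (Submodule.span_le.mpr
      (Set.range_subset_iff.mpr fun p => single_zpow_mem_Delta hπ a p.1 p.2))
    rw [Matrix.matrix_eq_sum_single X]
    refine Submodule.sum_mem _ fun i _ => Submodule.sum_mem _ fun j _ => ?_
    obtain ⟨r, hr⟩ := hX i j
    rw [single_eq_smul_single_zpow hπ a, ← hr, algebraMap_smul]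
    exact Submodule.smul_mem _ _ (Submodule.subset_span ⟨(i, j), rfl⟩)
  refine ⟨hgen ▸ Submodule.fg_span (Set.finite_range gen), eq_top_iff.mpr fun X _ => ?_⟩
  rw [Matrix.matrix_eq_sum_single X]
  refine Submodule.sum_mem _ fun i _ => Submodule.sum_mem _ fun j _ => ?_
  rw [single_eq_smul_single_zpow hπ a]
  exact Submodule.smul_mem _ _ (Submodule.subset_span (single_zpow_mem_Delta hπ a i j))

-- `π^(a j - a i) X i j` is the entry of a corner `E_ii X E_ji` of the finitely generated order
-- `D ⊇ Δ_a`, hence integral over `A`.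
lemma isMaximalOrder_deltaSubalgebra [IsDomain A] [IsIntegrallyClosed A] (a : Fin n → ℤ) :
    IsMaximalOrder A L (deltaSubalgebra L hπ a) := by
  refine ⟨isOrder_deltaSubalgebra hπ a, fun D hD hle => le_antisymm (fun X hX i j => ?_) hle⟩
  have hcorner : Matrix.single i i (algebraMap A L π ^ (a j - a i) * X i j) ∈ D := by
    have := mul_mem (mul_mem (hle (single_zpow_mem_Delta hπ a i i)) hX)
      (hle (single_zpow_mem_Delta hπ a j i))
    rwa [Matrix.single_mul_mul_single, sub_self, zpow_zero, one_mul, mul_comm] at this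
  exact IsIntegrallyClosed.isIntegral_iff.mp
    (Matrix.isIntegral_of_isIntegral_single (IsIntegral.of_mem_of_fg D hD.1 _ hcorner))

end Delta

theorem stmt5 (π : R) (hπ : Irreducible π) (n : ℕ)
    (a : Fin n → ℤ)
    (c d : Fin n → ℤ)
    (hc : Delta R K π (0 : Fin n → ℤ) ∩ Delta R K π a ⊆ Delta R K π c)
    (hd : Delta R K π (0 : Fin n → ℤ) ∩ Delta R K π a ⊆ Delta R K π d)
    (h : ∀ D : Subalgebra R (Matrix (Fin n) (Fin n) K), IsMaximalOrder R K D →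
      (Delta R K π c ∩ Delta R K π d ⊆ (D : Set (Matrix (Fin n) (Fin n) K)) ↔
        Delta R K π (0 : Fin n → ℤ) ∩ Delta R K π a ⊆
          (D : Set (Matrix (Fin n) (Fin n) K)))) :
    (Delta R K π c = Delta R K π (0 : Fin n → ℤ) ∧ Delta R K π d = Delta R K π a) ∨
    (Delta R K π c = Delta R K π a ∧ Delta R K π d = Delta R K π (0 : Fin n → ℤ)) := by
  have h0 : Delta R K π c ∩ Delta R K π d ⊆ Delta R K π 0 :=
    (h _ (isMaximalOrder_deltaSubalgebra hπ 0)).mpr Set.inter_subset_left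
  have ha : Delta R K π c ∩ Delta R K π d ⊆ Delta R K π a :=
    (h _ (isMaximalOrder_deltaSubalgebra hπ a)).mpr Set.inter_subset_right
  have hmin := (Delta_inter_eq_inter_iff hπ c d 0 a).mp
    (subset_antisymm (Set.subset_inter h0 ha) (Set.subset_inter hc hd))
  simp only [Pi.zero_apply, sub_self] at hmin
  rcases forall_sub_eq_or_forall_sub_eq_of_min_eq a c d hmin with hcd | hcd
  · exact .inl ⟨Delta_eq_of_sub_eq fun i j => by simp [(hcd i j).1],
      Delta_eq_of_sub_eq fun i j => (hcd i j).2⟩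
  · exact .inr ⟨Delta_eq_of_sub_eq fun i j => (hcd i j).1,
      Delta_eq_of_sub_eq fun i j => by simp [(hcd i j).2]⟩
end

section
/- Let Λ and M be full R-lattices in Kⁿ, i.e. finitely generated R-submodules of Kⁿ = (Fin n → K) that span Kⁿ over K. Then the stabilizer rings Δ_Λ = {X ∈ Mₙ(K) | X·v ∈ Λ for all v ∈ Λ} and Δ_M = {X ∈ Mₙ(K) | X·v ∈ M for all v ∈ M} are equal if and only if there exists c ∈ K* with M = c·Λ. (Split case, B = K, of the statement of Section 1: Δ_Λ = Δ_M if and only if M = Λλ for some λ ∈ B*.) -/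
variable (R K : Type*) [CommRing R] [IsDomain R] [IsDiscreteValuationRing R]
  [Field K] [Algebra R K] [IsFractionRing R K]

/-- The stabilizer ring `Δ_Λ = {X ∈ Mₙ(K) | X·v ∈ Λ for all v ∈ Λ}` of an `R`-submodule `Λ`
of `Kⁿ`. -/
def stabRing {n : ℕ} (Λ : Submodule R (Fin n → K)) : Set (Matrix (Fin n) (Fin n) K) :=
  {X | ∀ v ∈ Λ, X.mulVec v ∈ Λ}

/-!
Rescale `M` so that `c • M ⊆ Λ` but `c • M ⊄ 𝔪 • Λ`: a maximal rescaling inside `Λ` exists since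
`Λ` is Noetherian, and it cannot lie in `𝔪 • Λ = ϖ • Λ`, for then `ϖ⁻¹ c • M` would be a larger
one by Nakayama. A vector `v ∈ c • M \ 𝔪 • Λ` has a unit coordinate in a basis of `Λ`, so every
`w ∈ Λ` is the image of `v` under a rank-one endomorphism of `Kⁿ` preserving `Λ`. If
`Δ_Λ = Δ_M = Δ_{c • M}`, that endomorphism preserves `c • M`, whence `Λ ⊆ c • M`.
-/

open Pointwise IsLocalRing

namespace Submodule

section

variable {R : Type*} [CommRing R] {V : Type*} [AddCommGroup V] [Module R V]

theorem exists_maximal_of_forall_le {Λ : Submodule R V} [IsNoetherian R Λ]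
    {s : Set (Submodule R V)} (hs : s.Nonempty) (hle : ∀ N ∈ s, N ≤ Λ) :
    ∃ N ∈ s, ∀ N' ∈ s, ¬N < N' := by
  have : WellFoundedGT {N : Submodule R V // N ≤ Λ} :=
    (MapSubtype.orderIso Λ).symm.strictMono.wellFoundedGT
  obtain ⟨N₀, hN₀⟩ := hs
  obtain ⟨⟨N, _⟩, hN, hmax⟩ :=
    wellFounded_gt.has_min {N' : {N : Submodule R V // N ≤ Λ} | N'.1 ∈ s}
      ⟨⟨N₀, hle N₀ hN₀⟩, hN₀⟩
  exact ⟨N, hN, fun N' hN' => hmax ⟨N', hle N' hN'⟩ hN'⟩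

theorem coe_mem_smul_of_forall_repr_mem {ι : Type*} [Fintype ι] {Λ : Submodule R V}
    (b : Module.Basis ι R Λ) (I : Ideal R) {x : Λ} (hx : ∀ i, b.repr x i ∈ I) :
    (x : V) ∈ I • Λ := by
  rw [← b.sum_repr x, coe_sum]
  exact sum_mem fun i _ => smul_mem_smul (hx i) (b i).2

end

variable {R : Type*} [CommRing R] {K : Type*} [Field K] [Algebra R K]
  {V : Type*} [AddCommGroup V] [Module K V] [Module R V] [IsScalarTower R K V]

theorem exists_smul_le_of_fg [IsFractionRing R K] {Λ M : Submodule R V}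
    (hΛ : span K (Λ : Set V) = ⊤) (hM : M.FG) : ∃ c : Kˣ, c • M ≤ Λ := by
  classical
  have := (algebraMap R K).domain_nontrivial
  obtain ⟨F, rfl⟩ := hM
  obtain ⟨t, ht, htF⟩ : ∃ t ∈ nonZeroDivisors R, ∀ x ∈ F, t • x ∈ Λ := by
    induction F using Finset.induction_on with
    | empty => exact ⟨1, one_mem _, by simp⟩
    | insert x F _ ih =>
      obtain ⟨t, ht, htF⟩ := ih
      obtain ⟨⟨s, hs⟩, hsx⟩ := multiple_mem_span_of_mem_localization_span
        (nonZeroDivisors R) K (Λ : Set V) x (by rw [hΛ]; trivial)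
      rw [span_eq] at hsx
      refine ⟨t * s, mul_mem ht hs, ?_⟩
      simp only [Finset.mem_insert, forall_eq_or_imp]
      refine ⟨by rw [mul_smul]; exact Λ.smul_mem t hsx, fun y hy => ?_⟩
      rw [mul_comm, mul_smul]
      exact Λ.smul_mem s (htF y hy)
  refine ⟨Units.mk0 _ (IsFractionRing.to_map_ne_zero_of_mem_nonZeroDivisors ht), ?_⟩
  rintro _ ⟨y, hy, rfl⟩
  have hy' : y ∈ Λ.comap (t • LinearMap.id) :=
    span_le.2 (fun x hx => by simpa using htF x hx) hy
  simpa [algebraMap_smul] using hy'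

variable (K) in
theorem _root_.Module.Basis.extendOfIsLattice_repr_apply [IsFractionRing R K] {ι : Type*}
    {Λ : Submodule R V} [IsLattice K Λ] (b : Module.Basis ι R Λ) (x : Λ) (i : ι) :
    (b.extendOfIsLattice K).repr x i = algebraMap R K (b.repr x i) := by
  classical
  have h : ((b.extendOfIsLattice K).coord i).restrictScalars R ∘ₗ Λ.subtype =
      Algebra.linearMap R K ∘ₗ b.coord i :=
    b.ext fun j => by
      rw [LinearMap.comp_apply, LinearMap.comp_apply, LinearMap.restrictScalars_apply,
        subtype_apply, ← b.extendOfIsLattice_apply K, Module.Basis.coord_apply,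
        Module.Basis.coord_apply, Module.Basis.repr_self, Module.Basis.repr_self,
        Finsupp.single_apply, Finsupp.single_apply]
      split_ifs <;> simp
  exact LinearMap.congr_fun h x

theorem exists_linearMap_mapsTo_apply_eq [IsLocalRing R] [IsFractionRing R K]
    (Λ : Submodule R V) [IsLattice K Λ] [Module.Free R Λ] {v w : V} (hv : v ∈ Λ)
    (hv𝔪 : v ∉ maximalIdeal R • Λ) (hw : w ∈ Λ) :
    ∃ f : V →ₗ[K] V, Set.MapsTo f Λ Λ ∧ f v = w := by
  let b := Module.Free.chooseBasis R Λ
  obtain ⟨i, hi⟩ : ∃ i, IsUnit (b.repr ⟨v, hv⟩ i) := by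
    by_contra! h
    exact hv𝔪 (coe_mem_smul_of_forall_repr_mem b _ fun i => (mem_maximalIdeal _).2 (h i))
  let f := (algebraMap R K ↑hi.unit⁻¹ • (b.extendOfIsLattice K).coord i).smulRight w
  have hf : ∀ x (hx : x ∈ Λ), f x = (↑hi.unit⁻¹ * b.repr ⟨x, hx⟩ i) • w := fun x hx => by
    simp only [f, LinearMap.smulRight_apply, LinearMap.smul_apply, Module.Basis.coord_apply,
      smul_eq_mul]
    rw [b.extendOfIsLattice_repr_apply K ⟨x, hx⟩ i, ← map_mul, algebraMap_smul]
  refine ⟨f, fun x hx => ?_, ?_⟩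
  · rw [SetLike.mem_coe, hf x hx]
    exact Λ.smul_mem _ hw
  · rw [hf v hv, hi.val_inv_mul, one_smul]

theorem lt_inv_smul_of_mem_maximalIdeal [IsLocalRing R] {ϖ : R} (hϖ : ϖ ∈ maximalIdeal R)
    {γ : Kˣ} (hγx : ∀ x : V, γ • x = ϖ • x) {N : Submodule R V} (hN : N.FG)
    (hN0 : N ≠ ⊥) : N < γ⁻¹ • N := by
  refine lt_of_le_not_ge (fun x hx => ?_) fun hle => hN0 ?_
  · rw [← inv_smul_smul γ x]
    exact smul_mem_pointwise_smul _ _ _ (by rw [hγx]; exact N.smul_mem ϖ hx)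
  · refine eq_bot_of_le_smul_of_le_jacobson_bot _ N hN (fun x hx => ?_)
      (maximalIdeal_le_jacobson ⊥)
    rw [← smul_inv_smul γ x, hγx]
    exact smul_mem_smul hϖ (hle (smul_mem_pointwise_smul _ _ _ hx))

theorem exists_smul_le_and_not_le_maximalIdeal_smul [IsDomain R] [IsDiscreteValuationRing R]
    [IsFractionRing R K] (Λ : Submodule R V) [IsLattice K Λ] {M : Submodule R V} (hM : M.FG)
    (hM0 : M ≠ ⊥) : ∃ c : Kˣ, c • M ≤ Λ ∧ ¬c • M ≤ maximalIdeal R • Λ := by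
  obtain ⟨c₀, hc₀⟩ := exists_smul_le_of_fg (IsLattice.span_eq_top (A := K) (M := Λ)) hM
  obtain ⟨_, ⟨hcΛ, c, rfl⟩, hmax⟩ := exists_maximal_of_forall_le (Λ := Λ)
    (s := {N | N ≤ Λ ∧ ∃ c : Kˣ, c • M = N}) ⟨_, hc₀, c₀, rfl⟩ fun N hN => hN.1
  refine ⟨c, hcΛ, fun h𝔪 => ?_⟩
  obtain ⟨ϖ, hϖ⟩ := IsDiscreteValuationRing.exists_irreducible R
  let γ : Kˣ := Units.mk0 (algebraMap R K ϖ) <| IsFractionRing.to_map_ne_zero_of_mem_nonZeroDivisors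
    (mem_nonZeroDivisors_of_ne_zero hϖ.ne_zero)
  have hγx : ∀ x : V, γ • x = ϖ • x := fun x => algebraMap_smul K ϖ x
  have hγΛ : γ⁻¹ • c • M ≤ Λ := by
    intro _ hx
    obtain ⟨x, hxN, rfl⟩ := (mem_smul_pointwise_iff_exists _ _ _).1 hx
    rw [hϖ.maximalIdeal_eq, ideal_span_singleton_smul] at h𝔪
    obtain ⟨l, hl, rfl⟩ := (mem_smul_pointwise_iff_exists _ _ _).1 (h𝔪 hxN)
    rwa [← hγx, inv_smul_smul]
  have hcM : c • M ≠ ⊥ := by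
    have := (MulAction.injective c).ne hM0
    rwa [show c • (⊥ : Submodule R V) = ⊥ from map_bot _] at this
  exact hmax _ ⟨hγΛ, γ⁻¹ * c, mul_smul _ _ _⟩
    (lt_inv_smul_of_mem_maximalIdeal ((mem_maximalIdeal _).2 hϖ.not_isUnit) hγx (hM.map _) hcM)

end Submodule

section Stabilizer

variable {R K : Type*} [CommRing R] [Field K] [Algebra R K] {n : ℕ}

theorem stabRing_subset_stabRing_smul (c : Kˣ) (Λ : Submodule R (Fin n → K)) :
    stabRing R K Λ ⊆ stabRing R K (c • Λ) := by
  intro X hX _ hv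
  obtain ⟨v, hvΛ, rfl⟩ := (Submodule.mem_smul_pointwise_iff_exists _ _ _).1 hv
  rw [Matrix.mulVec_smul]
  exact Submodule.smul_mem_pointwise_smul _ _ _ (hX v hvΛ)

theorem stabRing_smul (c : Kˣ) (Λ : Submodule R (Fin n → K)) :
    stabRing R K (c • Λ) = stabRing R K Λ := by
  refine (stabRing_subset_stabRing_smul c Λ).antisymm' ?_
  simpa using stabRing_subset_stabRing_smul c⁻¹ (c • Λ)

theorem toMatrix'_mem_stabRing {Λ : Submodule R (Fin n → K)}
    {f : (Fin n → K) →ₗ[K] Fin n → K} (hf : Set.MapsTo f Λ Λ) :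
    LinearMap.toMatrix' f ∈ stabRing R K Λ := fun v hv => by
  simpa using hf hv

theorem exists_eq_smul_of_stabRing_eq [IsDomain R] [IsDiscreteValuationRing R]
    [IsFractionRing R K] {Λ M : Submodule R (Fin n → K)} [Submodule.IsLattice K Λ]
    [Submodule.IsLattice K M] (h : stabRing R K Λ = stabRing R K M) : ∃ c : Kˣ, M = c • Λ := by
  rcases eq_or_ne M ⊥ with rfl | hM0
  · have : Subsingleton (Fin n → K) := by
      have := Submodule.IsLattice.span_eq_top (A := K) (M := (⊥ : Submodule R (Fin n → K)))
      exact (Submodule.subsingleton_iff K).1 (subsingleton_iff_bot_eq_top.1 (by simpa using this))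
    exact ⟨1, Subsingleton.elim _ _⟩
  obtain ⟨c, hcM, hc𝔪⟩ :=
    Submodule.exists_smul_le_and_not_le_maximalIdeal_smul Λ Submodule.IsLattice.fg hM0
  obtain ⟨v, hvM, hv𝔪⟩ := SetLike.not_le_iff_exists.1 hc𝔪
  refine ⟨c⁻¹, eq_inv_smul_iff.2 (le_antisymm hcM fun w hw => ?_)⟩
  obtain ⟨f, hf, rfl⟩ := Submodule.exists_linearMap_mapsTo_apply_eq Λ (hcM hvM) hv𝔪 hw
  have hX : LinearMap.toMatrix' f ∈ stabRing R K (c • M) := by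
    rw [stabRing_smul, ← h]
    exact toMatrix'_mem_stabRing hf
  simpa using hX v hvM

end Stabilizer

/-- For full `R`-lattices `Λ, M` in `Kⁿ` (finitely generated `R`-submodules
spanning `Kⁿ` over `K`), the stabilizer rings `Δ_Λ` and `Δ_M` coincide if and only if
`M = c • Λ` for some nonzero scalar `c ∈ K*`. -/
theorem stmt11 (n : ℕ)
    (Λ M : Submodule R (Fin n → K)) (hΛfg : Λ.FG) (hMfg : M.FG)
    (hΛspan : Submodule.span K (Λ : Set (Fin n → K)) = ⊤)
    (hMspan : Submodule.span K (M : Set (Fin n → K)) = ⊤) :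
    stabRing R K Λ = stabRing R K M ↔
      ∃ c : K, c ≠ 0 ∧ (M : Set (Fin n → K)) = (fun v => c • v) '' (Λ : Set (Fin n → K)) := by
  have : Submodule.IsLattice K Λ := ⟨hΛfg, hΛspan⟩
  have : Submodule.IsLattice K M := ⟨hMfg, hMspan⟩
  have hcoe (c : Kˣ) : ((c • Λ : Submodule R _) : Set (Fin n → K)) = (fun v => (c : K) • v) '' Λ :=
    Submodule.coe_pointwise_smul c Λ
  constructor
  · intro h
    obtain ⟨c, rfl⟩ := exists_eq_smul_of_stabRing_eq h
    exact ⟨c, c.ne_zero, hcoe c⟩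
  · rintro ⟨c, hc, hM⟩
    have hM' : M = Units.mk0 c hc • Λ := SetLike.coe_injective (hM.trans (hcoe (.mk0 c hc)).symm)
    rw [hM', stabRing_smul]
end
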